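/- Let 𝐀 be a symmetric matrix over GF(2) whose rows and columns are indexed by a finite set E. Then every feasible set of D(𝐀) has even cardinality (i.e., D(𝐀) is even) if and only if every diagonal entry of 𝐀 is zero. -/

import Mathlib

/-!
A feasible singleton `{i}` is exactly a nonzero diagonal entry `A i i`, which gives one direction.
Conversely, a symmetric matrix with zero diagonal over GF(2) is alternating, and an alternating
matrix of odd size is singular over any commutative ring: in the Leibniz expansion the terms of
`σ` and `σ⁻¹` cancel, because transposing the product costs a sign `(-1) ^ n = -1`, and the
remaining terms, those of involutions, vanish since an involution of an odd set has a fixed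
point and so picks up a diagonal entry.
-/

/-- The feasible sets of the set system `D(𝐀)` determined by a matrix `𝐀` with rows
and columns indexed by `E`: a set `X` is feasible precisely when the principal
submatrix `𝐀[X]` is nonsingular (the empty submatrix has determinant `1`, so `∅` is
feasible by convention). -/
def matFeasible {E : Type*} [Fintype E] [DecidableEq E] {K : Type*} [Field K]
    (A : Matrix E E K) : Set (Finset E) :=
  {X | (A.submatrix (fun i : X => (i : E)) (fun j : X => (j : E))).det ≠ 0}

namespace Matrix

variable {n R : Type*} [Fintype n] [DecidableEq n] [CommRing R]

theorem det_eq_zero_of_transpose_eq_neg_of_odd_card {A : Matrix n n R} (hskew : Aᵀ = -A)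
    (hdiag : ∀ i, A i i = 0) (hodd : Odd (Fintype.card n)) : A.det = 0 := by
  rw [det_apply]
  refine Finset.sum_ninvolution (fun σ => σ⁻¹) (fun σ => ?_) (fun σ hσ hinv => hσ ?_)
    (fun _ => Finset.mem_univ _) inv_inv
  · have hprod : ∏ i, A (σ⁻¹ i) i = (-1) ^ Fintype.card n * ∏ i, A (σ i) i :=
      calc ∏ i, A (σ⁻¹ i) i = ∏ i, A i (σ i) := by
            rw [← Equiv.prod_comp σ]
            simp only [Equiv.Perm.inv_def, Equiv.symm_apply_apply]
        _ = ∏ i, -A (σ i) i := by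
            refine Finset.prod_congr rfl fun i _ => ?_
            rw [← neg_apply, ← hskew, transpose_apply]
        _ = (-1) ^ Fintype.card n * ∏ i, A (σ i) i := by
            rw [Finset.prod_neg, Finset.card_univ]
    rw [Equiv.Perm.sign_inv, hprod, hodd.neg_one_pow, neg_one_mul, smul_neg, add_neg_cancel]
  · have hinvol : σ ^ 2 ^ 1 = 1 := by
      rw [pow_one, sq, ← inv_mul_cancel σ, hinv]
    obtain ⟨i, hi⟩ := Equiv.Perm.exists_fixed_point_of_prime hodd.not_two_dvd_nat hinvol
    rw [Finset.prod_eq_zero (Finset.mem_univ i) (by rw [hi, hdiag]), smul_zero]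

end Matrix

theorem singleton_mem_matFeasible_iff {E : Type*} [Fintype E] [DecidableEq E] {K : Type*}
    [Field K] (A : Matrix E E K) (i : E) : {i} ∈ matFeasible A ↔ A i i ≠ 0 := by
  rw [matFeasible, Set.mem_ofPred_eq, Matrix.det_unique]
  rfl

/-- `D(𝐀)` is even iff all diagonal entries of `𝐀` vanish. -/
theorem matFeasible_even_iff_diag_zero {E : Type*} [Fintype E] [DecidableEq E]
    (A : Matrix E E (ZMod 2)) (hA : A.IsSymm) :
    (∀ X ∈ matFeasible A, Even X.card) ↔ (∀ i : E, A i i = 0) := by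
  refine ⟨fun heven i => ?_, fun hdiag X hX => ?_⟩
  · by_contra hii
    simpa using heven {i} ((singleton_mem_matFeasible_iff A i).2 hii)
  · by_contra hodd
    refine hX (Matrix.det_eq_zero_of_transpose_eq_neg_of_odd_card ?_ (fun j => hdiag j) ?_)
    · exact (hA.submatrix _).eq.trans (by ext; exact (ZMod.neg_eq_self_mod_two _).symm)
    · rwa [Fintype.card_coe, ← Nat.not_even_iff_odd]
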